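/- Let G^σ be a connected k-uniform oriented hypergraph with k even. Then the following are equivalent: (a) the induced signed hypergraph ΓG^σ is switching equivalent to ΓG^+; (b) S A(ΓG^σ) S = -A(G) for some signature matrix S; (c) S L(ΓG^σ) S = L(G) for some signature matrix S; (d) 0 is an H-eigenvalue of L(ΓG^σ). -/

import Mathlib

open BigOperators

variable {V : Type*}

/-- The adjacency tensor of a signed `k`-uniform hypergraph with edge set `E` and edge signs
`γ`: the entry at a tuple whose underlying vertex set is an edge `e` is `γ(e)/(k-1)!`,
and all other entries are `0`. -/
noncomputable def adjT (R : Type*) [Field R] [Fintype V] [DecidableEq V] (k : ℕ)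
    (E : Finset (Finset V)) (γ : Finset V → R) : (Fin k → V) → R :=
  fun i => if Finset.image i Finset.univ ∈ E
    then γ (Finset.image i Finset.univ) / (Nat.factorial (k - 1) : R) else 0

/-- `(lam, x)` is an eigenpair of the order-`k` tensor `A`:
`x ≠ 0` and `(A x^{k-1})_v = lam * x_v^{k-1}` for every `v`. -/
def IsTensorEigenpair (R : Type*) [CommRing R] [Fintype V] [DecidableEq V] (k : ℕ) [NeZero k]
    (A : (Fin k → V) → R) (lam : R) (x : V → R) : Prop :=
  x ≠ 0 ∧ ∀ v : V,
    (∑ i : Fin k → V, if i 0 = v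
      then A i * ∏ j ∈ Finset.univ.filter (fun j : Fin k => j ≠ 0), x (i j) else 0)
    = lam * x v ^ (k - 1)

/-- The spectral radius of a real order-`k` tensor: the supremum of the moduli of its
(complex) eigenvalues. -/
noncomputable def tSpecRad [Fintype V] [DecidableEq V] (k : ℕ) [NeZero k]
    (A : (Fin k → V) → ℝ) : ℝ :=
  sSup {r | ∃ lam : ℂ,
    (∃ x : V → ℂ, IsTensorEigenpair ℂ k (fun i => ((A i : ℝ) : ℂ)) lam x) ∧
      r = ‖lam‖}

/-- One vertex switching on a signed hypergraph: negate the sign of every edge containing `w`. -/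
def VSwitchStep [DecidableEq V] (γ δ : Finset V → ℝ) : Prop :=
  ∃ w : V, ∀ e, δ e = if w ∈ e then -γ e else γ e

/-- Two signed hypergraphs (with common edge set `E`) are switching equivalent if one is
obtained from the other by a finite sequence of vertex switchings (signs off `E` are
irrelevant). -/
def SignedSwitchEquiv [DecidableEq V] (E : Finset (Finset V)) (γ γ' : Finset V → ℝ) : Prop :=
  ∃ δ, Relation.ReflTransGen VSwitchStep γ δ ∧ ∀ e ∈ E, δ e = γ' e

/-- The action `S T S` of a signature matrix (diagonal ±1 matrix) `S` on an order-`k` tensor: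
`(S T S)_{i_1…i_k} = S_{i_1 i_1} t_{i_1…i_k} S_{i_2 i_2} ⋯ S_{i_k i_k}`. -/
def conjT (R : Type*) [CommRing R] [DecidableEq V] (k : ℕ) [NeZero k] [Fintype V]
    (S : V → R) (A : (Fin k → V) → R) : (Fin k → V) → R :=
  fun i => S (i 0) * A i * ∏ j ∈ Finset.univ.filter (fun j : Fin k => j ≠ 0), S (i j)

/-- The diagonal degree tensor `D(G)` of the hypergraph with edge set `E`:
`d_{v…v} = deg v`, all other entries `0`. -/
noncomputable def degT [Fintype V] [DecidableEq V] (k : ℕ) [NeZero k]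
    (E : Finset (Finset V)) : (Fin k → V) → ℝ :=
  fun i => if ∀ j, i j = i 0 then ((E.filter fun e => i 0 ∈ e).card : ℝ) else 0

/-- The Laplacian tensor `L(Γ) = D(G) + A(Γ)` of a signed `k`-uniform hypergraph. -/
noncomputable def lapT [Fintype V] [DecidableEq V] (k : ℕ) [NeZero k]
    (E : Finset (Finset V)) (γ : Finset V → ℝ) : (Fin k → V) → ℝ :=
  fun i => degT k E i + adjT ℝ k E γ i

/-- `σ` is an incidence orientation of the hypergraph with edge set `E`: each incidence
`(e, v)` with `v ∈ e ∈ E` is labeled `+1` or `-1`. -/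
def IsIncidenceOrientation (E : Finset (Finset V)) (σ : Finset V → V → ℝ) : Prop :=
  ∀ e ∈ E, ∀ v ∈ e, σ e v = 1 ∨ σ e v = -1

/-- The edge signs of the signed hypergraph `ΓG^σ` induced by an orientation `σ`:
`sgn_σ(e) = (-1)^{|e|-1} ∏_{v ∈ e} σ(e,v)` (for `k`-uniform edges, `|e| = k`). -/
def inducedSign [DecidableEq V] (k : ℕ) (σ : Finset V → V → ℝ) : Finset V → ℝ :=
  fun e => (-1 : ℝ) ^ (k - 1) * ∏ v ∈ e, σ e v

/-- The incidence graph of the hypergraph with edge set `E`. -/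
def hIncGraph [DecidableEq V] (E : Finset (Finset V)) : SimpleGraph (V ⊕ {e // e ∈ E}) where
  Adj x y := (∃ v e, x = Sum.inl v ∧ y = Sum.inr e ∧ v ∈ e.1) ∨
             (∃ v e, x = Sum.inr e ∧ y = Sum.inl v ∧ v ∈ e.1)
  symm := by
    constructor
    rintro x y (⟨v, e, h1, h2, h3⟩ | ⟨v, e, h1, h2, h3⟩)
    · exact Or.inr ⟨v, e, h2, h1, h3⟩
    · exact Or.inl ⟨v, e, h2, h1, h3⟩
  loopless := by
    constructor
    rintro x (⟨v, e, h1, h2, h3⟩ | ⟨v, e, h1, h2, h3⟩) <;> subst h1 <;> simp at h2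

/-- A hypergraph is connected if any two elements of `V ∪ E` are joined by a walk. -/
def HConnectedF [DecidableEq V] (E : Finset (Finset V)) : Prop := (hIncGraph E).Connected

open Finset

section Switching

variable [DecidableEq V]

def switchSign {R : Type*} [CommMonoid R] (S : V → R) (γ : Finset V → R) : Finset V → R :=
  fun e => γ e * ∏ v ∈ e, S v

omit [DecidableEq V] in
lemma switchSign_one {R : Type*} [CommMonoid R] (γ : Finset V → R) : switchSign 1 γ = γ := by
  funext e
  simp [switchSign]

omit [DecidableEq V] in
lemma switchSign_mul {R : Type*} [CommMonoid R] (S T : V → R) (γ : Finset V → R) :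
    switchSign (S * T) γ = switchSign S (switchSign T γ) := by
  funext e
  simp only [switchSign, Pi.mul_apply, prod_mul_distrib]
  ac_rfl

lemma switchSign_mulSingle {R : Type*} [CommRing R] (γ : Finset V → R) (w : V) (e : Finset V) :
    switchSign (Pi.mulSingle w (-1)) γ e = if w ∈ e then -γ e else γ e := by
  rw [switchSign, prod_pi_mulSingle']
  split_ifs <;> ring

lemma exists_switchSign_of_reflTransGen {γ δ : Finset V → ℝ}
    (h : Relation.ReflTransGen VSwitchStep γ δ) :
    ∃ S : V → ℝ, (∀ v, S v = 1 ∨ S v = -1) ∧ δ = switchSign S γ := by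
  induction h with
  | refl => exact ⟨1, fun _ => Or.inl rfl, (switchSign_one γ).symm⟩
  | tail _ hstep ih =>
    obtain ⟨S, hS, rfl⟩ := ih
    obtain ⟨w, hw⟩ := hstep
    refine ⟨Pi.mulSingle w (-1) * S, fun v => ?_, ?_⟩
    · by_cases hv : v = w
      · subst hv
        rcases hS v with h | h <;> simp [h]
      · simpa [Pi.mulSingle_eq_of_ne hv] using hS v
    · rw [switchSign_mul]
      funext e
      rw [hw, switchSign_mulSingle]

lemma reflTransGen_switchSign [Fintype V] (γ : Finset V → ℝ) {S : V → ℝ}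
    (hS : ∀ v, S v = 1 ∨ S v = -1) :
    Relation.ReflTransGen VSwitchStep γ (switchSign S γ) := by
  have hflips : ∀ T : Finset V,
      Relation.ReflTransGen VSwitchStep γ (switchSign (∏ w ∈ T, Pi.mulSingle w (-1)) γ) := by
    intro T
    induction T using Finset.induction_on with
    | empty => rw [prod_empty, switchSign_one]
    | insert w T hw ih =>
      rw [prod_insert hw, switchSign_mul]
      exact ih.tail ⟨w, fun e => switchSign_mulSingle _ w e⟩
  convert hflips {v | S v = -1}
  funext v
  rw [Finset.prod_apply, prod_pi_mulSingle]
  rcases hS v with h | h <;> simp [h]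

theorem signedSwitchEquiv_iff [Fintype V] (E : Finset (Finset V)) (γ γ' : Finset V → ℝ) :
    SignedSwitchEquiv E γ γ' ↔
      ∃ S : V → ℝ, (∀ v, S v = 1 ∨ S v = -1) ∧ ∀ e ∈ E, switchSign S γ e = γ' e := by
  constructor
  · rintro ⟨δ, hchain, hδ⟩
    obtain ⟨S, hS, rfl⟩ := exists_switchSign_of_reflTransGen hchain
    exact ⟨S, hS, hδ⟩
  · rintro ⟨S, hS, hγ'⟩
    exact ⟨_, reflTransGen_switchSign γ hS, hγ'⟩

end Switching
section Tuples

variable [DecidableEq V] {k : ℕ} {e : Finset V} {i : Fin k → V}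

lemma injective_of_image_univ_eq (he : #e = k) (him : univ.image i = e) :
    Function.Injective i := by
  rw [← Set.injOn_univ, ← coe_univ]
  exact injOn_of_card_image_eq (by rw [him, he, card_univ, Fintype.card_fin])

variable [NeZero k]

lemma prod_ne_zero_eq_prod_erase {M : Type*} [CommMonoid M] (he : #e = k)
    (him : univ.image i = e) (f : V → M) :
    ∏ j ∈ {j | j ≠ 0}, f (i j) = ∏ u ∈ e.erase (i 0), f u := by
  rw [filter_ne', ← him, ← image_erase (injective_of_image_univ_eq he him),
    prod_image fun a _ b _ hab => injective_of_image_univ_eq he him hab]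

lemma mul_prod_ne_zero_eq_prod {M : Type*} [CommMonoid M] (he : #e = k)
    (him : univ.image i = e) (f : V → M) :
    f (i 0) * ∏ j ∈ {j | j ≠ 0}, f (i j) = ∏ u ∈ e, f u := by
  have h0 : i 0 ∈ e := him ▸ mem_image_of_mem i (mem_univ 0)
  rw [prod_ne_zero_eq_prod_erase he him, mul_prod_erase e f h0]

lemma card_ne_zero_eq_card_erase (he : #e = k) {v : V} (hv : v ∈ e) :
    Fintype.card {j : Fin k // j ≠ 0} = Fintype.card (e.erase v) := by
  rw [Fintype.card_subtype_compl, Fintype.card_subtype_eq, Fintype.card_fin, Fintype.card_coe,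
    card_erase_of_mem hv, he]

lemma image_univ_dite_eq {v : V} (hv : v ∈ e) (g : {j : Fin k // j ≠ 0} ≃ e.erase v) :
    univ.image (fun j => if h : j = 0 then v else (g ⟨j, h⟩ : V)) = e := by
  ext u
  simp only [mem_image, mem_univ, true_and]
  constructor
  · rintro ⟨j, rfl⟩
    split_ifs with h
    · exact hv
    · exact mem_of_mem_erase (g ⟨j, h⟩).2
  · intro hu
    by_cases huv : u = v
    · exact ⟨0, by simp [huv]⟩
    · obtain ⟨j, hj⟩ := g.surjective ⟨u, mem_erase.mpr ⟨huv, hu⟩⟩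
      exact ⟨j, by simp [j.2, hj]⟩

lemma exists_equiv_of_image_univ_eq (he : #e = k) {v : V} (hi0 : i 0 = v)
    (him : univ.image i = e) :
    ∃ g : {j : Fin k // j ≠ 0} ≃ e.erase v, ∀ j : {j : Fin k // j ≠ 0}, (g j : V) = i j := by
  have hinj := injective_of_image_univ_eq he him
  have hmem : ∀ j : {j : Fin k // j ≠ 0}, i j ∈ e.erase v := fun j =>
    mem_erase.mpr ⟨fun h => j.2 (hinj (h.trans hi0.symm)), him ▸ mem_image_of_mem i (mem_univ _)⟩
  have hbij : Function.Bijective fun j : {j : Fin k // j ≠ 0} => (⟨i j, hmem j⟩ : e.erase v) :=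
    (Fintype.bijective_iff_injective_and_card _).mpr
      ⟨fun a b hab => Subtype.ext (hinj (congrArg Subtype.val hab :)),
        card_ne_zero_eq_card_erase he (hi0 ▸ him ▸ mem_image_of_mem i (mem_univ 0))⟩
  exact ⟨Equiv.ofBijective _ hbij, fun _ => rfl⟩

variable [Fintype V]

lemma card_tuples_image_eq (he : #e = k) {v : V} (hv : v ∈ e) :
    #{i : Fin k → V | i 0 = v ∧ univ.image i = e} = (k - 1).factorial := by
  have hfact : Fintype.card ({j : Fin k // j ≠ 0} ≃ e.erase v) = (k - 1).factorial := by
    rw [Fintype.card_equiv (Fintype.equivOfCardEq (card_ne_zero_eq_card_erase he hv)),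
      Fintype.card_subtype_compl, Fintype.card_subtype_eq, Fintype.card_fin]
  rw [← hfact, ← card_univ]
  symm
  refine card_bij (fun g _ j => if h : j = 0 then v else g ⟨j, h⟩)
    (fun g _ => mem_filter.mpr ⟨mem_univ _, by simp, image_univ_dite_eq hv g⟩) ?_ ?_
  · intro g _ g' _ hgg'
    ext j
    simpa [j.2] using congrFun hgg' j
  · intro i hi
    obtain ⟨hi0, him⟩ := (mem_filter.mp hi).2
    obtain ⟨g, hg⟩ := exists_equiv_of_image_univ_eq he hi0 him
    refine ⟨g, mem_univ _, funext fun j => ?_⟩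
    by_cases h : j = 0
    · simp [h, hi0]
    · simp [h, hg]

lemma exists_image_univ_eq (he : #e = k) : ∃ i : Fin k → V, univ.image i = e := by
  obtain ⟨v, hv⟩ := card_pos.mp (he ▸ k.pos_of_neZero)
  obtain ⟨i, hi⟩ := card_pos.mp ((card_tuples_image_eq he hv).symm ▸ (k - 1).factorial_pos)
  exact ⟨i, (mem_filter.mp hi).2.2⟩

lemma sum_tuples_image_eq {R : Type*} [CommSemiring R] (he : #e = k) (v : V) (f : V → R) :
    ∑ i : Fin k → V with i 0 = v ∧ univ.image i = e, ∏ j ∈ {j | j ≠ 0}, f (i j) =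
      if v ∈ e then (k - 1).factorial * ∏ u ∈ e.erase v, f u else 0 := by
  split_ifs with hv
  · rw [sum_congr rfl fun i hi => ?_, sum_const, card_tuples_image_eq he hv, nsmul_eq_mul]
    obtain ⟨hi0, him⟩ := (mem_filter.mp hi).2
    rw [prod_ne_zero_eq_prod_erase he him, hi0]
  · refine sum_eq_zero fun i hi => absurd ?_ hv
    obtain ⟨hi0, him⟩ := (mem_filter.mp hi).2
    exact hi0 ▸ him ▸ mem_image_of_mem i (mem_univ 0)

end Tuples

section TensorApply

variable [Fintype V] [DecidableEq V]

/-- `(A x^{k-1})_v`. -/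
def tensorApply {R : Type*} [CommSemiring R] (k : ℕ) [NeZero k] (A : (Fin k → V) → R)
    (x : V → R) (v : V) : R :=
  ∑ i : Fin k → V, if i 0 = v then A i * ∏ j ∈ {j | j ≠ 0}, x (i j) else 0

variable {k : ℕ} [NeZero k]

lemma isTensorEigenpair_iff {R : Type*} [CommRing R] (A : (Fin k → V) → R) (lam : R)
    (x : V → R) :
    IsTensorEigenpair R k A lam x ↔ x ≠ 0 ∧ ∀ v, tensorApply k A x v = lam * x v ^ (k - 1) :=
  Iff.rfl

lemma tensorApply_add {R : Type*} [CommSemiring R] (A B : (Fin k → V) → R) (x : V → R) (v : V) :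
    tensorApply k (fun i => A i + B i) x v = tensorApply k A x v + tensorApply k B x v := by
  simp only [tensorApply, ← sum_add_distrib]
  refine sum_congr rfl fun i _ => ?_
  split_ifs <;> ring

lemma tensorApply_degT (E : Finset (Finset V)) (x : V → ℝ) (v : V) :
    tensorApply k (degT k E) x v = #{e ∈ E | v ∈ e} * x v ^ (k - 1) := by
  rw [tensorApply, sum_eq_single fun _ => v]
  · simp [degT, filter_ne', card_erase_of_mem]
  · intro i _ hi
    split_ifs with h0
    · have hdiag : ¬ ∀ j, i j = i 0 := fun hall => hi (funext fun j => (hall j).trans h0)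
      simp [degT, hdiag]
    · rfl
  · simp

lemma tensorApply_adjT {R : Type*} [Field R] [CharZero R] (E : Finset (Finset V))
    (hE : ∀ e ∈ E, #e = k) (γ : Finset V → R) (x : V → R) (v : V) :
    tensorApply k (adjT R k E γ) x v = ∑ e ∈ E with v ∈ e, γ e * ∏ u ∈ e.erase v, x u := by
  have hfac : ((k - 1).factorial : R) ≠ 0 := Nat.cast_ne_zero.mpr (Nat.factorial_ne_zero _)
  have hfiber : ∀ i : Fin k → V, (if i 0 = v then adjT R k E γ i * ∏ j ∈ {j | j ≠ 0}, x (i j)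
      else 0) = ∑ e ∈ E, if i 0 = v ∧ univ.image i = e then
        γ e / (k - 1).factorial * ∏ j ∈ {j | j ≠ 0}, x (i j) else 0 := by
    intro i
    split_ifs with h0
    · simp only [h0, true_and, sum_ite_eq, adjT, ite_mul, zero_mul]
    · simp [h0]
  rw [tensorApply, sum_congr rfl fun i _ => hfiber i, sum_comm, sum_filter]
  refine sum_congr rfl fun e he => ?_
  rw [← sum_filter, ← mul_sum, sum_tuples_image_eq (hE e he)]
  split_ifs
  · field_simp
  · simp

lemma tensorApply_lapT (E : Finset (Finset V)) (hE : ∀ e ∈ E, #e = k) (γ : Finset V → ℝ)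
    (x : V → ℝ) (v : V) :
    tensorApply k (lapT k E γ) x v =
      #{e ∈ E | v ∈ e} * x v ^ (k - 1) + ∑ e ∈ E with v ∈ e, γ e * ∏ u ∈ e.erase v, x u := by
  unfold lapT
  rw [tensorApply_add, tensorApply_degT, tensorApply_adjT E hE]

lemma mul_tensorApply_lapT (E : Finset (Finset V)) (hE : ∀ e ∈ E, #e = k) (γ : Finset V → ℝ)
    (x : V → ℝ) (v : V) :
    x v * tensorApply k (lapT k E γ) x v =
      #{e ∈ E | v ∈ e} * x v ^ k + ∑ e ∈ E with v ∈ e, switchSign x γ e := by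
  rw [tensorApply_lapT E hE, mul_add, mul_sum]
  congr 1
  · rw [← Nat.sub_add_cancel (NeZero.one_le : 1 ≤ k), pow_succ, Nat.add_sub_cancel]
    ring
  · refine sum_congr rfl fun e he => ?_
    rw [switchSign, ← mul_prod_erase e x (mem_filter.mp he).2]
    ring

end TensorApply

section Conjugation

variable [Fintype V] [DecidableEq V] {k : ℕ} [NeZero k]

lemma adjT_eq_adjT_iff {R : Type*} [Field R] [CharZero R] {E : Finset (Finset V)}
    (hE : ∀ e ∈ E, #e = k) {γ γ' : Finset V → R} :
    adjT R k E γ = adjT R k E γ' ↔ ∀ e ∈ E, γ e = γ' e := by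
  constructor
  · intro h e he
    obtain ⟨i, hi⟩ := exists_image_univ_eq (hE e he)
    have hfac : ((k - 1).factorial : R) ≠ 0 := Nat.cast_ne_zero.mpr (Nat.factorial_ne_zero _)
    simpa [adjT, hi, he, hfac] using congrFun h i
  · intro h
    funext i
    unfold adjT
    split_ifs with hi
    · rw [h _ hi]
    · rfl

lemma conjT_adjT {R : Type*} [Field R] {E : Finset (Finset V)} (hE : ∀ e ∈ E, #e = k)
    (S : V → R) (γ : Finset V → R) :
    conjT R k S (adjT R k E γ) = adjT R k E (switchSign S γ) := by
  funext i
  unfold conjT adjT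
  split_ifs with hi
  · rw [switchSign, ← mul_prod_ne_zero_eq_prod (hE _ hi) rfl]
    ring
  · ring

lemma conjT_adjT_eq_neg_iff {R : Type*} [Field R] [CharZero R] {E : Finset (Finset V)}
    (hE : ∀ e ∈ E, #e = k) (S : V → R) (γ : Finset V → R) :
    conjT R k S (adjT R k E γ) = (fun i => -adjT R k E (fun _ => 1) i) ↔
      ∀ e ∈ E, switchSign S γ e = -1 := by
  have hneg : (fun i => -adjT R k E (fun _ => 1) i) = adjT R k E (fun _ => -1) := by
    funext i
    simp only [adjT, neg_div]
    split_ifs <;> simp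
  rw [conjT_adjT hE, hneg, adjT_eq_adjT_iff hE]

lemma conjT_add {R : Type*} [CommRing R] (S : V → R) (A B : (Fin k → V) → R) :
    conjT R k S (fun i => A i + B i) = fun i => conjT R k S A i + conjT R k S B i := by
  funext i
  simp only [conjT]
  ring

lemma conjT_degT (hk : Even k) (E : Finset (Finset V)) {S : V → ℝ}
    (hS : ∀ v, S v = 1 ∨ S v = -1) : conjT ℝ k S (degT k E) = degT k E := by
  funext i
  unfold conjT degT
  split_ifs with hdiag
  · have hpow : S (i 0) ^ k = 1 := by rcases hS (i 0) with h | h <;> simp [h, hk.neg_one_pow]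
    rw [prod_congr rfl fun j _ => by rw [hdiag j], prod_const, filter_ne', card_erase_of_mem
      (mem_univ _), card_univ, Fintype.card_fin, mul_comm, ← mul_assoc, ← pow_succ,
      Nat.sub_add_cancel NeZero.one_le, hpow, one_mul]
  · ring

lemma conjT_lapT_eq_iff (hk : Even k) (E : Finset (Finset V)) (γ : Finset V → ℝ) {S : V → ℝ}
    (hS : ∀ v, S v = 1 ∨ S v = -1) :
    conjT ℝ k S (lapT k E γ) = (fun i => degT k E i - adjT ℝ k E (fun _ => 1) i) ↔
      conjT ℝ k S (adjT ℝ k E γ) = fun i => -adjT ℝ k E (fun _ => 1) i := by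
  unfold lapT
  rw [conjT_add, conjT_degT hk E hS]
  simp only [funext_iff, sub_eq_add_neg, add_right_inj]

end Conjugation

section Connectivity

variable [DecidableEq V] {E : Finset (Finset V)}

lemma HConnectedF.nonempty (hconn : HConnectedF E) (hE : ∀ e ∈ E, e.Nonempty) : Nonempty V := by
  obtain ⟨a⟩ := SimpleGraph.Connected.nonempty hconn
  rcases a with v | e
  · exact ⟨v⟩
  · exact ⟨(hE e.1 e.2).choose⟩

lemma HConnectedF.forall_of_edgeClosed (hconn : HConnectedF E) {P : V → Prop}
    (hP : ∀ e ∈ E, ∀ v ∈ e, P v → ∀ u ∈ e, P u) {v₀ : V} (h₀ : P v₀) (v : V) : P v := by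
  let Q : V ⊕ {e // e ∈ E} → Prop := Sum.elim P fun e => ∀ u ∈ e.1, P u
  have hwalk : ∀ a b, (hIncGraph E).Walk a b → Q a → Q b := by
    intro a b w
    induction w with
    | nil => exact id
    | cons hadj _ ih =>
      refine fun hQ => ih ?_
      rcases hadj with ⟨u, e, rfl, rfl, hu⟩ | ⟨u, e, rfl, rfl, hu⟩
      · exact hP e.1 e.2 u hu hQ
      · exact hQ u hu
  obtain ⟨w⟩ := hconn.preconnected (Sum.inl v₀) (Sum.inl v)
  exact hwalk _ _ w h₀

end Connectivity

lemma eq_of_prod_eq_pow_card {ι : Type*} [DecidableEq ι] {s : Finset ι} {f : ι → ℝ} {m : ℝ}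
    (hm : 0 < m) (hf₀ : ∀ i ∈ s, 0 ≤ f i) (hfm : ∀ i ∈ s, f i ≤ m)
    (hprod : ∏ i ∈ s, f i = m ^ #s) {i : ι} (hi : i ∈ s) : f i = m := by
  refine le_antisymm (hfm i hi) (le_of_mul_le_mul_right ?_ (pow_pos hm (#s - 1)))
  calc m * m ^ (#s - 1) = ∏ i ∈ s, f i := by
        rw [hprod, ← pow_succ', Nat.sub_add_cancel (card_pos.mpr ⟨i, hi⟩)]
    _ = f i * ∏ j ∈ s.erase i, f j := (mul_prod_erase s f hi).symm
    _ ≤ f i * m ^ (#s - 1) := by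
        rw [← card_erase_of_mem hi, ← prod_const]
        exact mul_le_mul_of_nonneg_left (prod_le_prod (fun j hj => hf₀ j (mem_of_mem_erase hj))
          fun j hj => hfm j (mem_of_mem_erase hj)) (hf₀ i hi)

lemma abs_switchSign {γ : Finset V → ℝ} {e : Finset V} (hγ : |γ e| = 1) (x : V → ℝ) :
    |switchSign x γ e| = ∏ u ∈ e, |x u| := by
  rw [switchSign, abs_mul, hγ, one_mul, abs_prod]

section ZeroEigenvalue

variable [Fintype V] [DecidableEq V] {k : ℕ} [NeZero k] {E : Finset (Finset V)}

lemma isTensorEigenpair_lapT_zero [Nonempty V] (hk : Even k) (hE : ∀ e ∈ E, #e = k)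
    {γ : Finset V → ℝ} {S : V → ℝ} (hS : ∀ v, S v = 1 ∨ S v = -1)
    (hγS : ∀ e ∈ E, switchSign S γ e = -1) : IsTensorEigenpair ℝ k (lapT k E γ) 0 S := by
  refine (isTensorEigenpair_iff _ _ _).mpr ⟨fun h => ?_, fun v => ?_⟩
  · obtain ⟨v⟩ := ‹Nonempty V›
    rcases hS v with hv | hv <;> simp [h] at hv
  · have hSv : S v * S v = 1 := by rcases hS v with hv | hv <;> simp [hv]
    have hterm : ∀ e ∈ E.filter (v ∈ ·), switchSign S γ e = -1 := fun e he =>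
      hγS e (mem_filter.mp he).1
    have hpow : S v ^ k = 1 := by rcases hS v with hv | hv <;> simp [hv, hk.neg_one_pow]
    have h := mul_tensorApply_lapT E hE γ S v
    rw [sum_congr rfl hterm, hpow, sum_const, nsmul_eq_mul] at h
    have : tensorApply k (lapT k E γ) S v = S v * (S v * tensorApply k (lapT k E γ) S v) := by
      rw [← mul_assoc, hSv, one_mul]
    rw [zero_mul, this, h]
    ring

lemma switchSign_eq_neg_pow_of_abs_eq_max (hk : Even k) (hE : ∀ e ∈ E, #e = k)
    {γ : Finset V → ℝ} (hγ : ∀ e ∈ E, |γ e| = 1) {x : V → ℝ}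
    (hx : ∀ v, tensorApply k (lapT k E γ) x v = 0) {m : ℝ} (hm : ∀ u, |x u| ≤ m)
    {v : V} (hv : |x v| = m) : ∀ e ∈ E, v ∈ e → switchSign x γ e = -m ^ k := by
  have hlower : ∀ e ∈ E.filter (v ∈ ·), -m ^ k ≤ switchSign x γ e := by
    intro e he
    obtain ⟨he, -⟩ := mem_filter.mp he
    refine neg_le_of_abs_le ((abs_switchSign (hγ e he) x).trans_le ?_)
    rw [← hE e he, ← prod_const]
    exact prod_le_prod (fun u _ => abs_nonneg _) fun u _ => hm u
  have hsum : ∑ e ∈ E.filter (v ∈ ·), -m ^ k = ∑ e ∈ E.filter (v ∈ ·), switchSign x γ e := by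
    have h := mul_tensorApply_lapT E hE γ x v
    rw [hx v, mul_zero, ← hk.pow_abs, hv] at h
    rw [sum_const, nsmul_eq_mul]
    linarith
  intro e he hve
  exact ((sum_eq_sum_iff_of_le hlower).mp hsum e (mem_filter.mpr ⟨he, hve⟩)).symm

lemma exists_switchSign_eq_neg_one_of_isTensorEigenpair (hk : Even k) (hE : ∀ e ∈ E, #e = k)
    (hconn : HConnectedF E) {γ : Finset V → ℝ} (hγ : ∀ e ∈ E, |γ e| = 1) {x : V → ℝ}
    (hx : IsTensorEigenpair ℝ k (lapT k E γ) 0 x) :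
    ∃ S : V → ℝ, (∀ v, S v = 1 ∨ S v = -1) ∧ ∀ e ∈ E, switchSign S γ e = -1 := by
  obtain ⟨hx0, hx⟩ := (isTensorEigenpair_iff _ _ _).mp hx
  simp only [zero_mul] at hx
  obtain ⟨w, hw⟩ := Function.ne_iff.mp hx0
  have : Nonempty V := ⟨w⟩
  obtain ⟨v₀, hv₀⟩ := Finite.exists_max fun v => |x v|
  set m := |x v₀|
  have hm : 0 < m := (abs_pos.mpr hw).trans_le (hv₀ w)
  have hedge : ∀ v, |x v| = m → ∀ e ∈ E, v ∈ e → switchSign x γ e = -m ^ k :=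
    fun v => switchSign_eq_neg_pow_of_abs_eq_max hk hE hγ hx hv₀
  have hall : ∀ v, |x v| = m := by
    refine hconn.forall_of_edgeClosed (fun e he v hve hv u hu => ?_) rfl
    refine eq_of_prod_eq_pow_card hm (fun _ _ => abs_nonneg _) (fun u _ => hv₀ u) ?_ hu
    rw [← abs_switchSign (hγ e he), hedge v hv e he hve, hE e he, abs_neg, abs_pow, abs_of_pos hm]
  refine ⟨fun v => x v / m, fun v => ?_, fun e he => ?_⟩
  · rcases abs_eq hm.le |>.mp (hall v) with h | h <;> simp [h, hm.ne']
  · obtain ⟨v, hv⟩ := card_pos.mp ((hE e he).symm ▸ k.pos_of_neZero : 0 < #e)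
    rw [switchSign, prod_div_distrib, prod_const, hE e he, mul_div_assoc', ← switchSign,
      hedge v (hall v) e he hv, neg_div, div_self (pow_pos hm k).ne']

end ZeroEigenvalue

lemma abs_inducedSign [DecidableEq V] {E : Finset (Finset V)} {σ : Finset V → V → ℝ}
    (hσ : IsIncidenceOrientation E σ) (k : ℕ) : ∀ e ∈ E, |inducedSign k σ e| = 1 := by
  intro e he
  rw [inducedSign, abs_mul, abs_pow, abs_neg, abs_one, one_pow, one_mul, abs_prod]
  exact prod_eq_one fun v hv => by rcases hσ e he v hv with h | h <;> simp [h]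

/-- for a connected `k`-uniform oriented hypergraph `G^σ` with `k` even, the
following are equivalent: (a) `ΓG^σ` is switching equivalent to `ΓG⁺`;
(b) `S A(ΓG^σ) S = -A(G)` for some signature matrix `S`;
(c) `S L(ΓG^σ) S = L(G) = D(G) - A(G)` for some signature matrix `S`;
(d) `0` is an H-eigenvalue of `L(ΓG^σ)`. -/
theorem induced_switchEquiv_plus_tfae [Fintype V] [DecidableEq V]
    (k : ℕ) [NeZero k] (hk : Even k) (E : Finset (Finset V)) (hE : ∀ e ∈ E, e.card = k)
    (hconn : HConnectedF E) (σ : Finset V → V → ℝ) (hσ : IsIncidenceOrientation E σ) :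
    (SignedSwitchEquiv E (inducedSign k σ) (fun _ => (-1 : ℝ) ^ (k - 1)) ↔
      ∃ S : V → ℝ, (∀ v, S v = 1 ∨ S v = -1) ∧
        conjT ℝ k S (adjT ℝ k E (inducedSign k σ)) =
          fun i => -(adjT ℝ k E (fun _ => 1) i)) ∧
    (SignedSwitchEquiv E (inducedSign k σ) (fun _ => (-1 : ℝ) ^ (k - 1)) ↔
      ∃ S : V → ℝ, (∀ v, S v = 1 ∨ S v = -1) ∧
        conjT ℝ k S (lapT k E (inducedSign k σ)) =
          fun i => degT k E i - adjT ℝ k E (fun _ => 1) i) ∧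
    (SignedSwitchEquiv E (inducedSign k σ) (fun _ => (-1 : ℝ) ^ (k - 1)) ↔
      ∃ x : V → ℝ, IsTensorEigenpair ℝ k (lapT k E (inducedSign k σ)) 0 x) := by
  set γ := inducedSign k σ
  have hneg : (-1 : ℝ) ^ (k - 1) = -1 := (Nat.Even.sub_odd NeZero.one_le hk odd_one).neg_one_pow
  have ha : SignedSwitchEquiv E γ (fun _ => (-1 : ℝ) ^ (k - 1)) ↔
      ∃ S : V → ℝ, (∀ v, S v = 1 ∨ S v = -1) ∧ ∀ e ∈ E, switchSign S γ e = -1 := by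
    rw [signedSwitchEquiv_iff, hneg]
  have hb : (∃ S : V → ℝ, (∀ v, S v = 1 ∨ S v = -1) ∧
      conjT ℝ k S (adjT ℝ k E γ) = fun i => -(adjT ℝ k E (fun _ => 1) i)) ↔
      ∃ S : V → ℝ, (∀ v, S v = 1 ∨ S v = -1) ∧ ∀ e ∈ E, switchSign S γ e = -1 :=
    exists_congr fun S => and_congr_right fun _ => conjT_adjT_eq_neg_iff hE S γ
  have hc : (∃ S : V → ℝ, (∀ v, S v = 1 ∨ S v = -1) ∧
      conjT ℝ k S (lapT k E γ) = fun i => degT k E i - adjT ℝ k E (fun _ => 1) i) ↔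
      ∃ S : V → ℝ, (∀ v, S v = 1 ∨ S v = -1) ∧ ∀ e ∈ E, switchSign S γ e = -1 :=
    (exists_congr fun S => and_congr_right fun hS => conjT_lapT_eq_iff hk E γ hS).trans hb
  have hd : (∃ x : V → ℝ, IsTensorEigenpair ℝ k (lapT k E γ) 0 x) ↔
      ∃ S : V → ℝ, (∀ v, S v = 1 ∨ S v = -1) ∧ ∀ e ∈ E, switchSign S γ e = -1 := by
    have : Nonempty V := hconn.nonempty fun e he => card_pos.mp ((hE e he).symm ▸ k.pos_of_neZero)
    exact ⟨fun ⟨_, hx⟩ =>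
        exists_switchSign_eq_neg_one_of_isTensorEigenpair hk hE hconn (abs_inducedSign hσ k) hx,
      fun ⟨S, hS, hγS⟩ => ⟨S, isTensorEigenpair_lapT_zero hk hE hS hγS⟩⟩
  exact ⟨ha.trans hb.symm, ha.trans hc.symm, ha.trans hd.symm⟩
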